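/- Let each of the n agents have a superadditive valuation v_i with v_i(M) ≤ m. Fix any selection rule that assigns to each profile a utilitarian optimal allocation A*, and define the subsidy p_i = m − (max_A ∑_{j≠i} v_j(A_j) − ∑_{j≠i} v_j(A*_j)) for each agent i (the 'VCG with an upfront subsidy m' mechanism). Then this mechanism is truthful, utilitarian optimal, and envy-free, and every subsidy p_i lies in the interval [0, m]. -/
import Mathlib


open Finset

/-- A superadditive valuation on the goods `Fin m`, monotone, nonnegative,
with `v ∅ = 0` and `v M ≤ m`. -/
structure SuperVal (m : ℕ) where
  v : Finset (Fin m) → ℝ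
  nonneg : ∀ X, 0 ≤ v X
  v_empty : v ∅ = 0
  mono : ∀ ⦃X Y : Finset (Fin m)⦄, X ⊆ Y → v X ≤ v Y
  superadd : ∀ X Y : Finset (Fin m), Disjoint X Y → v X + v Y ≤ v (X ∪ Y)
  bounded : v Finset.univ ≤ (m : ℝ)

/-- An allocation: the bundles are pairwise disjoint subsets of the goods. -/
def IsAllocation {n m : ℕ} (A : Fin n → Finset (Fin m)) : Prop :=
  ∀ i j : Fin n, i ≠ j → Disjoint (A i) (A j)

/-- A utilitarian optimal allocation. -/
def UtilOpt {n m : ℕ} (P : Fin n → SuperVal m) (A : Fin n → Finset (Fin m)) : Prop :=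
  IsAllocation A ∧ ∀ B : Fin n → Finset (Fin m), IsAllocation B →
    ∑ i, (P i).v (B i) ≤ ∑ i, (P i).v (A i)

/-- `max_A ∑_{j ≠ i} v_j(A_j)`: the maximum welfare of the agents other than `i`. -/
noncomputable def maxOthers {n m : ℕ} (P : Fin n → SuperVal m) (i : Fin n) : ℝ :=
  sSup {s : ℝ | ∃ A : Fin n → Finset (Fin m), IsAllocation A ∧
    s = ∑ j ∈ Finset.univ.erase i, (P j).v (A j)}

namespace VCGaux

variable {n m : ℕ}

def othersSet (P : Fin n → SuperVal m) (i : Fin n) : Set ℝ :=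
  {s : ℝ | ∃ A : Fin n → Finset (Fin m), IsAllocation A ∧
    s = ∑ j ∈ Finset.univ.erase i, (P j).v (A j)}

lemma maxOthers_def (P : Fin n → SuperVal m) (i : Fin n) :
    maxOthers P i = sSup (othersSet P i) := rfl

lemma othersSet_finite (P : Fin n → SuperVal m) (i : Fin n) : (othersSet P i).Finite := by
  have hsub : othersSet P i ⊆
      (fun A : Fin n → Finset (Fin m) => ∑ j ∈ Finset.univ.erase i, (P j).v (A j)) ''
        Set.univ := by
    rintro s ⟨A, _, rfl⟩; exact ⟨A, trivial, rfl⟩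
  exact (Set.finite_univ.image _).subset hsub

lemma empty_alloc : IsAllocation (fun _ : Fin n => (∅ : Finset (Fin m))) :=
  fun _ _ _ => Finset.disjoint_empty_left _

lemma othersSet_nonempty (P : Fin n → SuperVal m) (i : Fin n) : (othersSet P i).Nonempty :=
  ⟨_, fun _ => ∅, empty_alloc, rfl⟩

lemma le_maxOthers (P : Fin n → SuperVal m) (i : Fin n) {A : Fin n → Finset (Fin m)}
    (hA : IsAllocation A) :
    ∑ j ∈ Finset.univ.erase i, (P j).v (A j) ≤ maxOthers P i :=
  le_csSup ((othersSet_finite P i).bddAbove) ⟨A, hA, rfl⟩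

lemma exists_maxOthers (P : Fin n → SuperVal m) (i : Fin n) :
    ∃ A, IsAllocation A ∧ maxOthers P i = ∑ j ∈ Finset.univ.erase i, (P j).v (A j) :=
  (othersSet_nonempty P i).csSup_mem (othersSet_finite P i)

end VCGaux

open VCGaux

/-- Theorem 4.1: the VCG mechanism with an upfront subsidy `m`, built on any selection
rule `g` of utilitarian optimal allocations, is truthful, utilitarian optimal, and
envy-free, and every subsidy lies in `[0, m]`. -/
theorem vcg_upfront_subsidy {n m : ℕ}
    (g : (Fin n → SuperVal m) → (Fin n → Finset (Fin m)))
    (hg : ∀ P : Fin n → SuperVal m, UtilOpt P (g P))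
    (pay : (Fin n → SuperVal m) → Fin n → ℝ)
    (hpay : ∀ (P : Fin n → SuperVal m) (i : Fin n),
      pay P i = (m : ℝ) - (maxOthers P i - ∑ j ∈ Finset.univ.erase i, (P j).v (g P j))) :
    -- truthfulness
    (∀ (P : Fin n → SuperVal m) (i : Fin n) (v' : SuperVal m),
      (P i).v (g (Function.update P i v') i) + pay (Function.update P i v') i ≤
        (P i).v (g P i) + pay P i) ∧
    -- utilitarian optimality
    (∀ P : Fin n → SuperVal m, UtilOpt P (g P)) ∧
    -- envy-freeness
    (∀ (P : Fin n → SuperVal m) (i j : Fin n),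
      (P i).v (g P j) + pay P j ≤ (P i).v (g P i) + pay P i) ∧
    -- subsidies lie in [0, m]
    (∀ (P : Fin n → SuperVal m) (i : Fin n), 0 ≤ pay P i ∧ pay P i ≤ (m : ℝ)) := by
  refine ⟨?_, hg, ?_, ?_⟩
  · -- truthfulness
    intro P i v'
    set P' := Function.update P i v' with hP'
    have hsum : ∀ A : Fin n → Finset (Fin m),
        ∑ j ∈ Finset.univ.erase i, (P' j).v (A j)
          = ∑ j ∈ Finset.univ.erase i, (P j).v (A j) := by
      intro A
      refine Finset.sum_congr rfl fun j hj => ?_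
      rw [hP', Function.update_of_ne (Finset.ne_of_mem_erase hj)]
    have hM : maxOthers P' i = maxOthers P i := by
      rw [maxOthers_def, maxOthers_def]
      congr 1
      ext s
      constructor
      · rintro ⟨A, hA, rfl⟩; exact ⟨A, hA, hsum A⟩
      · rintro ⟨A, hA, rfl⟩; exact ⟨A, hA, (hsum A).symm⟩
    have hopt := (hg P).2 (g P') (hg P').1
    have h1 : ∑ j ∈ Finset.univ.erase i, (P j).v (g P j) + (P i).v (g P i)
        = ∑ j, (P j).v (g P j) := Finset.sum_erase_add _ _ (mem_univ i)
    have h2 : ∑ j ∈ Finset.univ.erase i, (P j).v (g P' j) + (P i).v (g P' i)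
        = ∑ j, (P j).v (g P' j) := Finset.sum_erase_add _ _ (mem_univ i)
    rw [hpay, hpay, hM, hsum (g P')]
    linarith
  · -- envy-freeness
    intro P i j
    rcases eq_or_ne i j with rfl | hij
    · exact le_refl _
    set A := g P with hA
    have hAl := (hg P).1
    obtain ⟨C, hC, hMC⟩ := exists_maxOthers P i
    have hMiW : maxOthers P i ≤ ∑ l, (P l).v (A l) := by
      have h1 : ∑ l ∈ Finset.univ.erase i, (P l).v (C l) ≤ ∑ l, (P l).v (C l) := by
        rw [← Finset.sum_erase_add _ _ (mem_univ i)]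
        have := (P i).nonneg (C i); linarith
      exact hMC ▸ h1.trans ((hg P).2 C hC)
    have hd : ∀ c, c ≠ i → c ≠ j → Disjoint (A i ∪ A j) (A c) := fun c hci hcj =>
      Finset.disjoint_union_left.mpr ⟨hAl i c (Ne.symm hci), hAl j c (Ne.symm hcj)⟩
    set B : Fin n → Finset (Fin m) :=
      fun l => if l = i then A i ∪ A j else if l = j then ∅ else A l with hB
    have hBi : B i = A i ∪ A j := by simp [hB]
    have hBj : B j = ∅ := by simp [hB, Ne.symm hij]
    have hBo : ∀ l, l ≠ i → l ≠ j → B l = A l := by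
      intro l h1 h2; simp [hB, h1, h2]
    have hBalloc : IsAllocation B := by
      intro a b hab
      rcases eq_or_ne a i with rfl | hai
      · rcases eq_or_ne b j with rfl | hbj
        · rw [hBi, hBj]; exact Finset.disjoint_empty_right _
        · rw [hBi, hBo b (Ne.symm hab) hbj]; exact hd b (Ne.symm hab) hbj
      · rcases eq_or_ne a j with rfl | haj
        · rw [hBj]; exact Finset.disjoint_empty_left _
        · rcases eq_or_ne b i with rfl | hbi
          · rw [hBo a hai haj, hBi]; exact (hd a hai haj).symm
          · rcases eq_or_ne b j with rfl | hbj
            · rw [hBj]; exact Finset.disjoint_empty_right _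
            · rw [hBo a hai haj, hBo b hbi hbj]; exact hAl a b hab
    have hi_mem : i ∈ Finset.univ.erase j := Finset.mem_erase.mpr ⟨hij, mem_univ i⟩
    have hsumB : ∑ l ∈ Finset.univ.erase j, (P l).v (B l)
        = (P i).v (A i ∪ A j) + ∑ l ∈ (Finset.univ.erase j).erase i, (P l).v (A l) := by
      rw [← Finset.sum_erase_add _ _ hi_mem, add_comm]
      congr 1
      · exact congrArg (P i).v hBi
      · refine Finset.sum_congr rfl fun l hl => ?_
        have hli : l ≠ i := (Finset.mem_erase.mp hl).1
        have hlj : l ≠ j := (Finset.mem_erase.mp (Finset.mem_erase.mp hl).2).1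
        rw [hBo l hli hlj]
    have hMj : (P i).v (A i) + (P i).v (A j)
        + ∑ l ∈ (Finset.univ.erase j).erase i, (P l).v (A l) ≤ maxOthers P j := by
      have hsup := (P i).superadd (A i) (A j) (hAl i j hij)
      have hle := le_maxOthers P j hBalloc
      rw [hsumB] at hle
      linarith
    have hWj : ∑ l ∈ Finset.univ.erase j, (P l).v (A l) + (P j).v (A j)
        = ∑ l, (P l).v (A l) := Finset.sum_erase_add _ _ (mem_univ j)
    have hWi : ∑ l ∈ Finset.univ.erase i, (P l).v (A l) + (P i).v (A i)
        = ∑ l, (P l).v (A l) := Finset.sum_erase_add _ _ (mem_univ i)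
    have hWji : ∑ l ∈ (Finset.univ.erase j).erase i, (P l).v (A l) + (P i).v (A i)
        = ∑ l ∈ Finset.univ.erase j, (P l).v (A l) := Finset.sum_erase_add _ _ hi_mem
    rw [hpay, hpay]
    linarith
  · -- subsidy bounds
    intro P i
    constructor
    · rw [hpay]
      obtain ⟨C, hC, hMC⟩ := exists_maxOthers P i
      set B : Fin n → Finset (Fin m) := Function.update C i ∅ with hB
      have hBalloc : IsAllocation B := by
        intro a b hab
        rcases eq_or_ne a i with rfl | hai
        · simp [hB]
        · rcases eq_or_ne b i with rfl | hbi
          · simp [hB, Function.update_of_ne hai]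
          · rw [hB, Function.update_of_ne hai, Function.update_of_ne hbi]
            exact hC a b hab
      have hsum : ∑ l, (P l).v (B l) = ∑ l ∈ Finset.univ.erase i, (P l).v (C l) := by
        rw [← Finset.sum_erase_add _ _ (mem_univ i)]
        have h0 : (P i).v (B i) = 0 := by simp [hB, (P i).v_empty]
        rw [h0, add_zero]
        refine Finset.sum_congr rfl fun l hl => ?_
        rw [hB, Function.update_of_ne (Finset.ne_of_mem_erase hl)]
      have hle : maxOthers P i ≤ ∑ l, (P l).v (g P l) := by
        rw [hMC, ← hsum]; exact (hg P).2 B hBalloc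
      have hWi : ∑ l ∈ Finset.univ.erase i, (P l).v (g P l) + (P i).v (g P i)
          = ∑ l, (P l).v (g P l) := Finset.sum_erase_add _ _ (mem_univ i)
      have hvm : (P i).v (g P i) ≤ (m : ℝ) :=
        ((P i).mono (Finset.subset_univ _)).trans (P i).bounded
      linarith
    · rw [hpay]
      have hle := le_maxOthers P i (hg P).1
      linarith
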